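/- arXiv:2303.11602 — 2 statements merged into one kernel-verified Lean document; each statement's English description precedes it below -/
import Mathlib

section
/- Let $X_1,\ldots,X_n$ ($n \geq 2$) be i.i.d. samples from a probability measure $\rho$, and let $\psi, \varphi$ be square-integrable functions and $v$ a vector-valued square-integrable function (all with finite relevant moments). Define $\overline{\langle \varphi,\psi\rangle}_n = \frac{1}{n}\sum_i \varphi(X_i)\psi(X_i)$, $\|\psi\|_n^2 = \frac{1}{n}\sum_i \psi(X_i)^2$, coefficients $a_j = -\|\psi\|_n^2\,\varphi(X_j) + \overline{\langle\varphi,\psi\rangle}_n\,\psi(X_j)$, and $G_n = \frac{1}{n-1}\sum_{j=1}^n a_j\, v(X_j)$. Then $\mathbb{E}[G_n] = -\mathbb{E}[\psi(X)^2]\,\mathbb{E}[\varphi(X) v(X)] + \mathbb{E}[\varphi(X)\psi(X)]\,\mathbb{E}[\psi(X) v(X)]$. -/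
open MeasureTheory

lemma pi_map_pair {Ω : Type*} [MeasurableSpace Ω] (ρ : Measure Ω) [IsProbabilityMeasure ρ]
    {n : ℕ} {i j : Fin n} (hij : i ≠ j) :
    (Measure.pi fun _ : Fin n => ρ).map (fun x => (x i, x j)) = ρ.prod ρ := by
  refine (Measure.prod_eq fun s t hs ht => ?_).symm
  rw [Measure.map_apply (by fun_prop) (hs.prod ht)]
  have hpre : (fun x : Fin n → Ω => (x i, x j)) ⁻¹' (s ×ˢ t)
      = Set.pi Set.univ (fun k => if k = i then s else if k = j then t else Set.univ) := by
    ext x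
    simp only [Set.mem_preimage, Set.mem_prod, Set.mem_pi, Set.mem_univ, forall_true_left]
    constructor
    · rintro ⟨h1, h2⟩ k
      by_cases hki : k = i
      · subst hki; simp [h1, if_neg]
      · by_cases hkj : k = j
        · subst hkj; simp [hki, h2]
        · simp [hki, hkj]
    · intro h
      refine ⟨?_, ?_⟩
      · have := h i; simpa using this
      · have := h j; simpa [Ne.symm hij] using this
  rw [hpre, Measure.pi_pi]
  calc (∏ k, ρ (if k = i then s else if k = j then t else Set.univ))
      = ∏ k ∈ ({i, j} : Finset (Fin n)), ρ (if k = i then s else if k = j then t else Set.univ) := by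
        refine (Finset.prod_subset (Finset.subset_univ _) fun k _ hk => ?_).symm
        simp only [Finset.mem_insert, Finset.mem_singleton, not_or] at hk
        simp [hk.1, hk.2]
    _ = ρ s * ρ t := by
        rw [Finset.prod_pair hij]
        simp [Ne.symm hij]

lemma integrable_pair_pi {Ω : Type*} [MeasurableSpace Ω] (ρ : Measure Ω) [IsProbabilityMeasure ρ]
    {E : Type*} [NormedAddCommGroup E] [NormedSpace ℝ E]
    {n : ℕ} {i j : Fin n} (hij : i ≠ j) {f : Ω → ℝ} {g : Ω → E}
    (hf : Integrable f ρ) (hg : Integrable g ρ) :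
    Integrable (fun x : Fin n → Ω => f (x i) • g (x j)) (Measure.pi fun _ => ρ) :=
  ((MeasurePreserving.integrable_comp ⟨by fun_prop, pi_map_pair ρ hij⟩
    (hf.smul_prod hg).1).mpr (hf.smul_prod hg))

lemma integral_pair_pi {Ω : Type*} [MeasurableSpace Ω] (ρ : Measure Ω) [IsProbabilityMeasure ρ]
    {E : Type*} [NormedAddCommGroup E] [NormedSpace ℝ E] [CompleteSpace E]
    {n : ℕ} {i j : Fin n} (hij : i ≠ j) {f : Ω → ℝ} {g : Ω → E}
    (hf : Integrable f ρ) (hg : Integrable g ρ) :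
    ∫ x : Fin n → Ω, f (x i) • g (x j) ∂(Measure.pi fun _ => ρ)
      = (∫ y, f y ∂ρ) • ∫ y, g y ∂ρ := by
  have hT : Measurable fun x : Fin n → Ω => (x i, x j) := by fun_prop
  have h1 : ∫ x : Fin n → Ω, f (x i) • g (x j) ∂(Measure.pi fun _ => ρ)
      = ∫ p : Ω × Ω, f p.1 • g p.2 ∂(ρ.prod ρ) := by
    rw [← pi_map_pair ρ hij]
    exact (integral_map hT.aemeasurable (by rw [pi_map_pair ρ hij]; exact (hf.smul_prod hg).1)).symm
  rw [h1, integral_prod_smul]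

theorem stmt_5 {Ω : Type*} [MeasurableSpace Ω] (ρ : Measure Ω) [IsProbabilityMeasure ρ]
    {E : Type*} [NormedAddCommGroup E] [NormedSpace ℝ E] [CompleteSpace E]
    (n : ℕ) (hn : 2 ≤ n) (ψ φ : Ω → ℝ) (v : Ω → E)
    (hψ2 : Integrable (fun x => ψ x ^ 2) ρ)
    (hφψ : Integrable (fun x => φ x * ψ x) ρ)
    (hφv : Integrable (fun x => φ x • v x) ρ)
    (hψv : Integrable (fun x => ψ x • v x) ρ) :
    ∫ X : Fin n → Ω,
        ((1 : ℝ) / ((n : ℝ) - 1)) •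
          ∑ j, (-((1 / (n : ℝ)) * ∑ i, ψ (X i) ^ 2) * φ (X j)
              + ((1 / (n : ℝ)) * ∑ i, φ (X i) * ψ (X i)) * ψ (X j)) • v (X j)
        ∂(Measure.pi fun _ => ρ)
      = -((∫ x, ψ x ^ 2 ∂ρ) • ∫ x, φ x • v x ∂ρ)
        + (∫ x, φ x * ψ x ∂ρ) • ∫ x, ψ x • v x ∂ρ := by
  have hn2 : (2:ℝ) ≤ (n:ℝ) := by exact_mod_cast hn
  have hn0 : (n:ℝ) ≠ 0 := by linarith
  have hn1 : (n:ℝ) - 1 ≠ 0 := by linarith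
  set μ : Measure (Fin n → Ω) := Measure.pi fun _ => ρ with hμ
  set δ : ℝ := 1 / ((n:ℝ) * ((n:ℝ) - 1)) with hδ
  set W : E := (∫ x, φ x * ψ x ∂ρ) • (∫ x, ψ x • v x ∂ρ)
      - (∫ x, ψ x ^ 2 ∂ρ) • (∫ x, φ x • v x ∂ρ) with hW
  -- pointwise rewriting of the integrand as a double sum
  have hpt : ∀ x : Fin n → Ω,
      ((1 : ℝ) / ((n : ℝ) - 1)) •
          ∑ j, (-((1 / (n : ℝ)) * ∑ i, ψ (x i) ^ 2) * φ (x j)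
              + ((1 / (n : ℝ)) * ∑ i, φ (x i) * ψ (x i)) * ψ (x j)) • v (x j)
        = ∑ j, ∑ i, (δ * (φ (x i) * ψ (x i) * ψ (x j) - ψ (x i) ^ 2 * φ (x j))) • v (x j) := by
    intro x
    rw [Finset.smul_sum]
    refine Finset.sum_congr rfl fun j _ => ?_
    rw [← Finset.sum_smul, smul_smul]
    congr 1
    rw [Finset.mul_sum, Finset.mul_sum, neg_mul, Finset.sum_mul, ← Finset.sum_neg_distrib,
      Finset.sum_mul, ← Finset.sum_add_distrib, Finset.mul_sum]
    refine Finset.sum_congr rfl fun i _ => ?_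
    rw [hδ]
    field_simp
    ring
  -- integrability of each summand
  have hintne : ∀ i j : Fin n, i ≠ j → Integrable
      (fun x : Fin n → Ω => (δ * (φ (x i) * ψ (x i) * ψ (x j) - ψ (x i) ^ 2 * φ (x j))) • v (x j)) μ := by
    intro i j hij
    have hB := integrable_pair_pi ρ hij hφψ hψv
    have hA := integrable_pair_pi ρ hij hψ2 hφv
    have := ((hB.sub hA).smul δ)
    refine this.congr (Filter.Eventually.of_forall fun x => ?_)
    simp only [Pi.smul_apply, Pi.sub_apply, smul_smul, ← sub_smul, ← mul_sub]
  have hint : ∀ i j : Fin n, Integrable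
      (fun x : Fin n → Ω => (δ * (φ (x i) * ψ (x i) * ψ (x j) - ψ (x i) ^ 2 * φ (x j))) • v (x j)) μ := by
    intro i j
    by_cases hij : i = j
    · subst hij
      have : (fun x : Fin n → Ω => (δ * (φ (x i) * ψ (x i) * ψ (x i) - ψ (x i) ^ 2 * φ (x i))) • v (x i))
          = fun _ => (0 : E) := by
        funext x
        rw [show δ * (φ (x i) * ψ (x i) * ψ (x i) - ψ (x i) ^ 2 * φ (x i)) = 0 by ring, zero_smul]
      rw [this]
      exact integrable_zero _ _ _
    · exact hintne i j hij
  -- value of each integral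
  have hval : ∀ i j : Fin n,
      ∫ x : Fin n → Ω, (δ * (φ (x i) * ψ (x i) * ψ (x j) - ψ (x i) ^ 2 * φ (x j))) • v (x j) ∂μ
        = if i = j then 0 else δ • W := by
    intro i j
    by_cases hij : i = j
    · subst hij
      rw [if_pos rfl]
      have : (fun x : Fin n → Ω => (δ * (φ (x i) * ψ (x i) * ψ (x i) - ψ (x i) ^ 2 * φ (x i))) • v (x i))
          = fun _ => (0 : E) := by
        funext x
        rw [show δ * (φ (x i) * ψ (x i) * ψ (x i) - ψ (x i) ^ 2 * φ (x i)) = 0 by ring, zero_smul]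
      rw [this]
      simp
    · rw [if_neg hij]
      have hB := integrable_pair_pi ρ hij hφψ hψv
      have hA := integrable_pair_pi ρ hij hψ2 hφv
      have heq : (fun x : Fin n → Ω => (δ * (φ (x i) * ψ (x i) * ψ (x j) - ψ (x i) ^ 2 * φ (x j))) • v (x j))
          = fun x => δ • ((φ (x i) * ψ (x i)) • (ψ (x j) • v (x j)) - (ψ (x i) ^ 2) • (φ (x j) • v (x j))) := by
        funext x
        simp only [smul_smul, smul_sub, ← sub_smul, ← mul_sub]
      rw [heq, integral_smul, integral_sub hB hA, integral_pair_pi ρ hij hφψ hψv,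
        integral_pair_pi ρ hij hψ2 hφv, hW]
  -- putting everything together
  have hbody : (fun X : Fin n → Ω =>
      ((1 : ℝ) / ((n : ℝ) - 1)) •
          ∑ j, (-((1 / (n : ℝ)) * ∑ i, ψ (X i) ^ 2) * φ (X j)
              + ((1 / (n : ℝ)) * ∑ i, φ (X i) * ψ (X i)) * ψ (X j)) • v (X j))
      = fun x => ∑ j, ∑ i, (δ * (φ (x i) * ψ (x i) * ψ (x j) - ψ (x i) ^ 2 * φ (x j))) • v (x j) :=
    funext hpt
  rw [hbody, integral_finset_sum _ (fun j _ => integrable_finset_sum _ (fun i _ => hint i j))]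
  have : ∀ j : Fin n, (∫ x : Fin n → Ω,
      ∑ i, (δ * (φ (x i) * ψ (x i) * ψ (x j) - ψ (x i) ^ 2 * φ (x j))) • v (x j) ∂μ)
      = ((n:ℝ) - 1) • (δ • W) := by
    intro j
    rw [integral_finset_sum _ (fun i _ => hint i j)]
    have h1 : ∀ i : Fin n,
        (∫ x : Fin n → Ω, (δ * (φ (x i) * ψ (x i) * ψ (x j) - ψ (x i) ^ 2 * φ (x j))) • v (x j) ∂μ)
        = δ • W - (if i = j then δ • W else 0) := by
      intro i
      rw [hval i j]
      by_cases hij : i = j <;> simp [hij]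
    simp_rw [h1]
    rw [Finset.sum_sub_distrib, Finset.sum_const, Finset.sum_ite_eq' Finset.univ j,
      Finset.card_univ, Fintype.card_fin]
    simp only [Finset.mem_univ, if_pos]
    rw [← Nat.cast_smul_eq_nsmul ℝ, sub_smul, one_smul]
  simp_rw [this]
  rw [Finset.sum_const, Finset.card_univ, Fintype.card_fin, ← Nat.cast_smul_eq_nsmul ℝ,
    smul_smul, smul_smul, hδ]
  rw [show (n:ℝ) * ((n:ℝ) - 1) * (1 / ((n:ℝ) * ((n:ℝ) - 1))) = 1 by field_simp, one_smul, hW]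
  abel
end

section
/- Let $L: \mathbb{R}^d \to \mathbb{R}$ have $C$-Lipschitz gradient, $\theta' = \theta - \eta G$ with $\mathbb{E}[G] = \alpha \nabla L(\theta)$ for a (random, $\mathcal{F}$-measurable) scalar $\alpha$ satisfying $\alpha \geq 1/C_r^2 > 0$ almost surely, $\mathbb{E}[|G|^2] \leq K(|\nabla L(\theta)|^2 + \sigma^2)$, and $0 < \eta \leq \frac{1}{K C C_r^2}$. Then $\mathbb{E}[L(\theta')] \leq L(\theta) - \frac{\eta}{2C_r^2}|\nabla L(\theta)|^2 + \frac{KC\eta^2\sigma^2}{2}$. -/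
open MeasureTheory intervalIntegral

local notation "⟪" x ", " y "⟫" => @inner ℝ _ _ x y

lemma descent {E : Type*} [NormedAddCommGroup E] [InnerProductSpace ℝ E] [CompleteSpace E]
    (L : E → ℝ) (C : ℝ) (hC : 0 ≤ C) (hdiff : Differentiable ℝ L)
    (hLip : ∀ x y, ‖gradient L x - gradient L y‖ ≤ C * ‖x - y‖) (x v : E) :
    L (x + v) ≤ L x + ⟪gradient L x, v⟫ + C / 2 * ‖v‖ ^ 2 := by
  have hgradLip : LipschitzWith C.toNNReal (gradient L) := by
    apply LipschitzWith.of_dist_le_mul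
    intro a b
    rw [dist_eq_norm]
    exact (hLip a b).trans (by rw [Real.coe_toNNReal C hC, dist_eq_norm])
  set φ : ℝ → ℝ := fun t => ⟪gradient L (x + t • v), v⟫ with hφ
  have hderiv : ∀ t : ℝ, HasDerivAt (fun t : ℝ => L (x + t • v)) (φ t) t := by
    intro t
    have h1 : HasDerivAt (fun t : ℝ => x + t • v) v t := by
      simpa using ((hasDerivAt_id t).smul_const v).const_add x
    have h2 := ((hdiff (x + t • v)).hasGradientAt).hasFDerivAt
    exact (h2.comp_hasDerivAt t h1).congr_deriv (by simp [hφ, gradient, InnerProductSpace.toDual_symm_apply])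
  have hcont : Continuous φ := by
    apply Continuous.inner
    · exact hgradLip.continuous.comp (by continuity)
    · exact continuous_const
  have hInt : IntervalIntegrable φ MeasureTheory.volume 0 1 := hcont.intervalIntegrable 0 1
  have heq : L (x + v) - L x = ∫ t in (0:ℝ)..1, φ t := by
    have := intervalIntegral.integral_eq_sub_of_hasDerivAt
      (fun t _ => hderiv t) hInt
    simpa using this.symm
  have hbound : ∫ t in (0:ℝ)..1, φ t ≤ ∫ t in (0:ℝ)..1, (⟪gradient L x, v⟫ + C * t * ‖v‖ ^ 2) := by
    apply intervalIntegral.integral_mono_on (by norm_num) hInt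
    · exact (Continuous.intervalIntegrable (by continuity) 0 1)
    · intro t ht
      have h1 : φ t - ⟪gradient L x, v⟫ ≤ C * t * ‖v‖ ^ 2 := by
        have : φ t - ⟪gradient L x, v⟫ = ⟪gradient L (x + t • v) - gradient L x, v⟫ := by
          simp [hφ, inner_sub_left]
        rw [this]
        calc ⟪gradient L (x + t • v) - gradient L x, v⟫
            ≤ ‖gradient L (x + t • v) - gradient L x‖ * ‖v‖ := real_inner_le_norm _ _
          _ ≤ (C * ‖(x + t • v) - x‖) * ‖v‖ := by
              gcongr; exact hLip _ _
          _ = C * t * ‖v‖ ^ 2 := by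
              rw [add_sub_cancel_left, norm_smul, Real.norm_eq_abs, abs_of_nonneg ht.1]
              ring
      linarith
  have hval : ∫ t in (0:ℝ)..1, (⟪gradient L x, v⟫ + C * t * ‖v‖ ^ 2)
      = ⟪gradient L x, v⟫ + C / 2 * ‖v‖ ^ 2 := by
    rw [intervalIntegral.integral_add (intervalIntegrable_const)
      (Continuous.intervalIntegrable (by continuity) 0 1)]
    have h2 : (fun t : ℝ => C * t * ‖v‖ ^ 2) = fun t : ℝ => (C * ‖v‖ ^ 2) * t := by
      ext t; ring
    rw [h2, intervalIntegral.integral_const_mul, integral_id]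
    simp; ring
  linarith [heq, hbound.trans_eq hval]
theorem stmt_13 {Ω : Type*} [MeasurableSpace Ω] (μ : Measure Ω) [IsProbabilityMeasure μ]
    {E : Type*} [NormedAddCommGroup E] [InnerProductSpace ℝ E] [CompleteSpace E]
    (L : E → ℝ) (C sig Cr K : ℝ) (hC : 0 < C) (hCr : 0 < Cr) (hK : 0 < K)
    (hdiff : Differentiable ℝ L)
    (hLip : ∀ x y, ‖gradient L x - gradient L y‖ ≤ C * ‖x - y‖)
    (θ : E) (G : Ω → E) (α : Ω → ℝ)
    (η : ℝ) (hη : 0 < η) (hη2 : η ≤ 1 / (K * C * Cr ^ 2))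
    (hGint : Integrable G μ)
    (hG2int : Integrable (fun ω => ‖G ω‖ ^ 2) μ)
    (hαint : Integrable α μ)
    (hLint : Integrable (fun ω => L (θ - η • G ω)) μ)
    (hα : ∀ᵐ ω ∂μ, 1 / Cr ^ 2 ≤ α ω)
    (hunbiased : ∫ ω, G ω ∂μ = (∫ ω, α ω ∂μ) • gradient L θ)
    (hvar : ∫ ω, ‖G ω‖ ^ 2 ∂μ ≤ K * (‖gradient L θ‖ ^ 2 + sig ^ 2)) :
    ∫ ω, L (θ - η • G ω) ∂μ
      ≤ L θ - η / (2 * Cr ^ 2) * ‖gradient L θ‖ ^ 2 + K * C * η ^ 2 * sig ^ 2 / 2 := by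
  set g := gradient L θ with hg
  have key : ∀ ω, L (θ - η • G ω) ≤
      L θ + (- η) * ⟪g, G ω⟫ + C * η ^ 2 / 2 * ‖G ω‖ ^ 2 := by
    intro ω
    have h := descent L C hC.le hdiff hLip θ (-(η • G ω))
    have h1 : θ + -(η • G ω) = θ - η • G ω := by abel
    have h2 : ⟪g, -(η • G ω)⟫ = (-η) * ⟪g, G ω⟫ := by
      rw [inner_neg_right, real_inner_smul_right]; ring
    have h3 : C / 2 * ‖-(η • G ω)‖ ^ 2 = C * η ^ 2 / 2 * ‖G ω‖ ^ 2 := by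
      rw [norm_neg, norm_smul, Real.norm_eq_abs, mul_pow, sq_abs]; ring
    rw [h1, h2, h3] at h
    exact h
  have hinner : Integrable (fun ω => ⟪g, G ω⟫) μ := hGint.const_inner g
  have h1int : Integrable (fun ω => L θ + (- η) * ⟪g, G ω⟫) μ :=
    (integrable_const _).add (hinner.const_mul _)
  have hRint : Integrable
      (fun ω => L θ + (- η) * ⟪g, G ω⟫ + C * η ^ 2 / 2 * ‖G ω‖ ^ 2) μ :=
    h1int.add (hG2int.const_mul _)
  have hmono := integral_mono hLint hRint key
  have hsplit : ∫ ω, (L θ + (- η) * ⟪g, G ω⟫ + C * η ^ 2 / 2 * ‖G ω‖ ^ 2) ∂μ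
      = L θ + (- η) * (∫ ω, ⟪g, G ω⟫ ∂μ) + C * η ^ 2 / 2 * ∫ ω, ‖G ω‖ ^ 2 ∂μ := by
    rw [integral_add h1int (hG2int.const_mul _),
      integral_add (integrable_const _) (hinner.const_mul _),
      MeasureTheory.integral_const_mul, MeasureTheory.integral_const_mul, MeasureTheory.integral_const]
    simp
  have hin : ∫ ω, ⟪g, G ω⟫ ∂μ = (∫ ω, α ω ∂μ) * ‖g‖ ^ 2 := by
    rw [integral_inner hGint, hunbiased, real_inner_smul_right,
      real_inner_self_eq_norm_sq]
  have hA : 1 / Cr ^ 2 ≤ ∫ ω, α ω ∂μ := by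
    have := integral_mono_ae (integrable_const (1 / Cr ^ 2)) hαint hα
    simpa using this
  rw [hsplit, hin] at hmono
  set A := ∫ ω, α ω ∂μ
  set N := ‖g‖ ^ 2 with hN
  have hN0 : 0 ≤ N := sq_nonneg _
  have hS : C * η ^ 2 / 2 * (∫ ω, ‖G ω‖ ^ 2 ∂μ) ≤ C * η ^ 2 / 2 * (K * (N + sig ^ 2)) := by
    gcongr
  have hη3 : η * (K * C * Cr ^ 2) ≤ 1 := by
    rw [le_div_iff₀ (by positivity)] at hη2
    exact hη2
  have hkey : C * K * η ^ 2 ≤ η / Cr ^ 2 := by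
    rw [le_div_iff₀ (by positivity)]
    nlinarith
  have hAN : η / Cr ^ 2 * N ≤ η * A * N := by
    have h' : η * (1 / Cr ^ 2) * N ≤ η * A * N := by gcongr
    calc η / Cr ^ 2 * N = η * (1 / Cr ^ 2) * N := by ring
      _ ≤ η * A * N := h'
  have : L θ + (- η) * (A * N) + C * η ^ 2 / 2 * (K * (N + sig ^ 2))
      ≤ L θ - η / (2 * Cr ^ 2) * N + K * C * η ^ 2 * sig ^ 2 / 2 := by
    have e1 : η / (2 * Cr ^ 2) * N = (η / Cr ^ 2) * N / 2 := by ring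
    nlinarith [mul_le_mul_of_nonneg_right hkey hN0, hAN, e1]
  linarith [hmono, hS]
end
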